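/- Let Ω ⊆ ℝ³ be open, and let ρ : Ω → ℝ with ρ > 0, u = (u₁,u₂,u₃) : Ω → ℝ³ with u₁ > 0, and φ : Ω → ℝ be C¹ functions satisfying the steady Euler–Poisson continuity equation ∂₁(ρu₁)+∂₂(ρu₂)+∂₃(ρu₃) = 0 and momentum equations ∂₁(ρu_iu₁)+∂₂(ρu_iu₂)+∂₃(ρu_iu₃)+∂_i(p(ρ)) = ρ∂_iφ for i = 1,2,3. Set β₂ = u₂/u₁, β₃ = u₃/u₁, G = 1 + β₂² + β₃², D = ∂₁ + β₂∂₂ + β₃∂₃, and B = ½(u₁²+u₂²+u₃²) + h(ρ) − φ. Then G satisfies the Riccati-type equation DG = (1/(B+φ−h(ρ)))·(G²·∂₁(h(ρ)−φ) − G·D(h(ρ)−φ)) on Ω (note B + φ − h(ρ) = ½|u|² > 0). -/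

import Mathlib

open Real Set MeasureTheory

/-- The `i`-th partial derivative of a function on `ℝ³`. -/
noncomputable def pd (i : Fin 3) (f : (Fin 3 → ℝ) → ℝ) (x : Fin 3 → ℝ) : ℝ :=
  fderiv ℝ f x (Pi.single i 1)

/-- The slope `β₂ = u₂/u₁`. -/
noncomputable def beta2 (u1 u2 : (Fin 3 → ℝ) → ℝ) : (Fin 3 → ℝ) → ℝ :=
  fun x => u2 x / u1 x

/-- The slope `β₃ = u₃/u₁`. -/
noncomputable def beta3 (u1 u3 : (Fin 3 → ℝ) → ℝ) : (Fin 3 → ℝ) → ℝ :=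
  fun x => u3 x / u1 x

/-- `G = 1 + β₂² + β₃²`. -/
noncomputable def Gfun (u1 u2 u3 : (Fin 3 → ℝ) → ℝ) : (Fin 3 → ℝ) → ℝ :=
  fun x => 1 + (beta2 u1 u2 x) ^ 2 + (beta3 u1 u3 x) ^ 2

/-- The transport operator `D = ∂₁ + β₂∂₂ + β₃∂₃`. -/
noncomputable def Dop (u1 u2 u3 : (Fin 3 → ℝ) → ℝ) (f : (Fin 3 → ℝ) → ℝ)
    (x : Fin 3 → ℝ) : ℝ :=
  pd 0 f x + beta2 u1 u2 x * pd 1 f x + beta3 u1 u3 x * pd 2 f x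

/-- The Bernoulli function `B = ½(u₁²+u₂²+u₃²) + h(ρ) − φ`. -/
noncomputable def Bfun (ρ u1 u2 u3 φ : (Fin 3 → ℝ) → ℝ) (h : ℝ → ℝ) :
    (Fin 3 → ℝ) → ℝ :=
  fun x => (1 / 2) * ((u1 x) ^ 2 + (u2 x) ^ 2 + (u3 x) ^ 2) + h (ρ x) - φ x

/-! Subtracting `uᵢ` times the continuity equation from the `i`-th momentum equation, and using
`∇p(ρ) = ρ ∇h(ρ)`, gives the Euler equations in convective form `(u · ∇) uᵢ = -∂ᵢ(h(ρ) - φ)`.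
Since `D = (u · ∇) / u₁` and `G = |u|² / u₁²`, the quotient rule expresses `DG` through the
`(u · ∇) uᵢ`; substituting the Euler equations and `B + φ - h(ρ) = |u|²/2` gives the identity. -/

noncomputable def advection (u1 u2 u3 f : (Fin 3 → ℝ) → ℝ) (x : Fin 3 → ℝ) : ℝ :=
  u1 x * pd 0 f x + u2 x * pd 1 f x + u3 x * pd 2 f x

section PartialDerivatives

variable {f g : (Fin 3 → ℝ) → ℝ} {x : Fin 3 → ℝ}

lemma pd_mul (hf : DifferentiableAt ℝ f x) (hg : DifferentiableAt ℝ g x) (i : Fin 3) :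
    pd i (fun y => f y * g y) x = f x * pd i g x + g x * pd i f x := by
  simp [pd, fderiv_fun_mul hf hg]

lemma pd_sub (hf : DifferentiableAt ℝ f x) (hg : DifferentiableAt ℝ g x) (i : Fin 3) :
    pd i (fun y => f y - g y) x = pd i f x - pd i g x := by
  simp [pd, fderiv_fun_sub hf hg]

lemma pd_comp {φ : ℝ → ℝ} {φ' : ℝ} (hφ : HasDerivAt φ φ' (f x))
    (hf : DifferentiableAt ℝ f x) (i : Fin 3) :
    pd i (fun y => φ (f y)) x = φ' * pd i f x := by
  have hc := (hφ.comp_hasFDerivAt x hf.hasFDerivAt).fderiv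
  rw [Function.comp_def] at hc
  simp [pd, hc]

lemma pd_div (hf : DifferentiableAt ℝ f x) (hg : DifferentiableAt ℝ g x) (hgx : g x ≠ 0)
    (i : Fin 3) :
    pd i (fun y => f y / g y) x = (g x * pd i f x - f x * pd i g x) / g x ^ 2 := by
  simp only [div_eq_mul_inv]
  rw [pd_mul (g := fun y => (g y)⁻¹) hf (hg.inv hgx), pd_comp (hasDerivAt_inv hgx) hg]
  field_simp
  ring

lemma pd_mul_mul {ρ : (Fin 3 → ℝ) → ℝ} (hρ : DifferentiableAt ℝ ρ x)
    (hf : DifferentiableAt ℝ f x) (hg : DifferentiableAt ℝ g x) (i : Fin 3) :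
    pd i (fun y => ρ y * f y * g y) x
      = ρ x * g x * pd i f x + f x * pd i (fun y => ρ y * g y) x := by
  simp only [mul_right_comm (ρ _) (f _) (g _)]
  rw [pd_mul (f := fun y => ρ y * g y) (hρ.mul hg) hf]

lemma pd_pressure_eq_mul_pd_enthalpy {ρ : (Fin 3 → ℝ) → ℝ} {p h : ℝ → ℝ} {p' : ℝ}
    (hp : HasDerivAt p p' (ρ x)) (hh : HasDerivAt h (p' / ρ x) (ρ x)) (hρx : ρ x ≠ 0)
    (hρ : DifferentiableAt ℝ ρ x) (i : Fin 3) :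
    pd i (fun y => p (ρ y)) x = ρ x * pd i (fun y => h (ρ y)) x := by
  rw [pd_comp hp hρ, pd_comp hh hρ]
  field_simp

end PartialDerivatives

lemma advection_eq_neg_pd_of_euler {ρ u1 u2 u3 v φ : (Fin 3 → ℝ) → ℝ} {p h : ℝ → ℝ} {p' : ℝ}
    {x : Fin 3 → ℝ} {i : Fin 3}
    (dρ : DifferentiableAt ℝ ρ x) (d1 : DifferentiableAt ℝ u1 x)
    (d2 : DifferentiableAt ℝ u2 x) (d3 : DifferentiableAt ℝ u3 x)
    (dv : DifferentiableAt ℝ v x) (dφ : DifferentiableAt ℝ φ x) (hρx : ρ x ≠ 0)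
    (hp : HasDerivAt p p' (ρ x)) (hh : HasDerivAt h (p' / ρ x) (ρ x))
    (hcont : pd 0 (fun y => ρ y * u1 y) x + pd 1 (fun y => ρ y * u2 y) x
        + pd 2 (fun y => ρ y * u3 y) x = 0)
    (hmom : pd 0 (fun y => ρ y * v y * u1 y) x + pd 1 (fun y => ρ y * v y * u2 y) x
        + pd 2 (fun y => ρ y * v y * u3 y) x + pd i (fun y => p (ρ y)) x = ρ x * pd i φ x) :
    advection u1 u2 u3 v x = -pd i (fun y => h (ρ y) - φ y) x := by
  rw [pd_mul_mul dρ dv d1, pd_mul_mul dρ dv d2, pd_mul_mul dρ dv d3,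
    pd_pressure_eq_mul_pd_enthalpy hp hh hρx dρ] at hmom
  rw [pd_sub (f := fun y => h (ρ y)) (hh.differentiableAt.comp x dρ) dφ]
  refine mul_left_cancel₀ hρx ?_
  unfold advection
  linear_combination hmom - v x * hcont

lemma Dop_eq_advection_div {u1 : (Fin 3 → ℝ) → ℝ} {x : Fin 3 → ℝ} (u2 u3 f : (Fin 3 → ℝ) → ℝ)
    (hu1 : u1 x ≠ 0) : Dop u1 u2 u3 f x = advection u1 u2 u3 f x / u1 x := by
  simp only [Dop, advection, beta2, beta3]
  field_simp

lemma Gfun_eq_div {u1 : (Fin 3 → ℝ) → ℝ} {x : Fin 3 → ℝ} (u2 u3 : (Fin 3 → ℝ) → ℝ)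
    (hu1 : u1 x ≠ 0) : Gfun u1 u2 u3 x = (u1 x ^ 2 + u2 x ^ 2 + u3 x ^ 2) / u1 x ^ 2 := by
  simp only [Gfun, beta2, beta3]
  field_simp

lemma Bfun_add_sub_enthalpy (ρ u1 u2 u3 φ : (Fin 3 → ℝ) → ℝ) (h : ℝ → ℝ) (x : Fin 3 → ℝ) :
    Bfun ρ u1 u2 u3 φ h x + φ x - h (ρ x) = (u1 x ^ 2 + u2 x ^ 2 + u3 x ^ 2) / 2 := by
  simp only [Bfun]
  ring

lemma advection_Gfun {u1 u2 u3 : (Fin 3 → ℝ) → ℝ} {x : Fin 3 → ℝ}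
    (d1 : DifferentiableAt ℝ u1 x) (d2 : DifferentiableAt ℝ u2 x)
    (d3 : DifferentiableAt ℝ u3 x) (hu1 : u1 x ≠ 0) :
    u1 x ^ 3 * advection u1 u2 u3 (Gfun u1 u2 u3) x
      = 2 * u2 x * (u1 x * advection u1 u2 u3 u2 x - u2 x * advection u1 u2 u3 u1 x)
        + 2 * u3 x * (u1 x * advection u1 u2 u3 u3 x - u3 x * advection u1 u2 u3 u1 x) := by
  have db2 : DifferentiableAt ℝ (fun y => u2 y / u1 y) x := by fun_prop (disch := exact hu1)
  have db3 : DifferentiableAt ℝ (fun y => u3 y / u1 y) x := by fun_prop (disch := exact hu1)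
  have hG : ∀ i, pd i (Gfun u1 u2 u3) x
      = 2 * (u2 x / u1 x) * pd i (fun y => u2 y / u1 y) x
        + 2 * (u3 x / u1 x) * pd i (fun y => u3 y / u1 y) x := by
    intro i
    rw [show Gfun u1 u2 u3 = fun y => 1 + (u2 y / u1 y) ^ 2 + (u3 y / u1 y) ^ 2 from rfl]
    simp [pd, fderiv_fun_add, fderiv_fun_pow, db2, db3, db2.fun_pow 2, db3.fun_pow 2]
  simp only [advection, hG, pd_div d2 d1 hu1, pd_div d3 d1 hu1]
  field_simp
  ring

theorem riccati_equation_for_G_general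
    (Ω : Set (Fin 3 → ℝ)) (hΩ : IsOpen Ω)
    (ρ u1 u2 u3 φ : (Fin 3 → ℝ) → ℝ)
    (p p' h : ℝ → ℝ)
    (hρpos : ∀ x ∈ Ω, 0 < ρ x)
    (hu1pos : ∀ x ∈ Ω, 0 < u1 x)
    (hρ : ContDiffOn ℝ 1 ρ Ω) (hu1 : ContDiffOn ℝ 1 u1 Ω)
    (hu2 : ContDiffOn ℝ 1 u2 Ω) (hu3 : ContDiffOn ℝ 1 u3 Ω)
    (hφ : ContDiffOn ℝ 1 φ Ω)
    (hp : ∀ r : ℝ, 0 < r → HasDerivAt p (p' r) r)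
    (hh : ∀ r : ℝ, 0 < r → HasDerivAt h (p' r / r) r)
    (hcont : ∀ x ∈ Ω,
      pd 0 (fun y => ρ y * u1 y) x + pd 1 (fun y => ρ y * u2 y) x
        + pd 2 (fun y => ρ y * u3 y) x = 0)
    (hmom1 : ∀ x ∈ Ω,
      pd 0 (fun y => ρ y * u1 y * u1 y) x + pd 1 (fun y => ρ y * u1 y * u2 y) x
        + pd 2 (fun y => ρ y * u1 y * u3 y) x + pd 0 (fun y => p (ρ y)) x
        = ρ x * pd 0 φ x)
    (hmom2 : ∀ x ∈ Ω,
      pd 0 (fun y => ρ y * u2 y * u1 y) x + pd 1 (fun y => ρ y * u2 y * u2 y) x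
        + pd 2 (fun y => ρ y * u2 y * u3 y) x + pd 1 (fun y => p (ρ y)) x
        = ρ x * pd 1 φ x)
    (hmom3 : ∀ x ∈ Ω,
      pd 0 (fun y => ρ y * u3 y * u1 y) x + pd 1 (fun y => ρ y * u3 y * u2 y) x
        + pd 2 (fun y => ρ y * u3 y * u3 y) x + pd 2 (fun y => p (ρ y)) x
        = ρ x * pd 2 φ x) :
    ∀ x ∈ Ω,
      Dop u1 u2 u3 (Gfun u1 u2 u3) x
        = (1 / (Bfun ρ u1 u2 u3 φ h x + φ x - h (ρ x))) *
          ( (Gfun u1 u2 u3 x) ^ 2 * pd 0 (fun y => h (ρ y) - φ y) x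
            - Gfun u1 u2 u3 x * Dop u1 u2 u3 (fun y => h (ρ y) - φ y) x ) := by
  intro x hx
  have hdiff {f : (Fin 3 → ℝ) → ℝ} (hf : ContDiffOn ℝ 1 f Ω) : DifferentiableAt ℝ f x :=
    (hf.contDiffAt (hΩ.mem_nhds hx)).differentiableAt one_ne_zero
  have hρx := hρpos x hx
  have hu1x := (hu1pos x hx).ne'
  have euler {v : (Fin 3 → ℝ) → ℝ} {i : Fin 3} (hv : ContDiffOn ℝ 1 v Ω) :=
    advection_eq_neg_pd_of_euler (v := v) (i := i) (hdiff hρ) (hdiff hu1) (hdiff hu2) (hdiff hu3)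
      (hdiff hv) (hdiff hφ) hρx.ne' (hp _ hρx) (hh _ hρx) (hcont x hx)
  have hG := advection_Gfun (hdiff hu1) (hdiff hu2) (hdiff hu3) hu1x
  rw [euler hu1 (hmom1 x hx), euler hu2 (hmom2 x hx), euler hu3 (hmom3 x hx)] at hG
  rw [Dop_eq_advection_div _ _ _ hu1x, Dop_eq_advection_div _ _ _ hu1x,
    Gfun_eq_div _ _ hu1x, Bfun_add_sub_enthalpy]
  generalize advection u1 u2 u3 (Gfun u1 u2 u3) x = DG at hG ⊢
  have hspeed : u1 x ^ 2 + u2 x ^ 2 + u3 x ^ 2 ≠ 0 := by positivity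
  simp only [advection]
  field_simp
  linear_combination hG

/-- `G = 1 + β₂² + β₃²` satisfies the Riccati-type equation
`DG = (1/(B+φ−h(ρ))) (G² ∂₁(h(ρ)−φ) − G D(h(ρ)−φ))`. -/
theorem riccati_equation_for_G
    (Ω : Set (Fin 3 → ℝ)) (hΩ : IsOpen Ω)
    (ρ u1 u2 u3 φ : (Fin 3 → ℝ) → ℝ)
    (p p' h : ℝ → ℝ)
    (hρpos : ∀ x ∈ Ω, 0 < ρ x)
    (hu1pos : ∀ x ∈ Ω, 0 < u1 x)
    (hρ : ContDiffOn ℝ 1 ρ Ω) (hu1 : ContDiffOn ℝ 1 u1 Ω)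
    (hu2 : ContDiffOn ℝ 1 u2 Ω) (hu3 : ContDiffOn ℝ 1 u3 Ω)
    (hφ : ContDiffOn ℝ 1 φ Ω)
    (hpC : ContDiffOn ℝ 1 p (Set.Ioi 0))
    (hp : ∀ r : ℝ, 0 < r → HasDerivAt p (p' r) r)
    (hh : ∀ r : ℝ, 0 < r → HasDerivAt h (p' r / r) r)
    (hcont : ∀ x ∈ Ω,
      pd 0 (fun y => ρ y * u1 y) x + pd 1 (fun y => ρ y * u2 y) x
        + pd 2 (fun y => ρ y * u3 y) x = 0)
    (hmom1 : ∀ x ∈ Ω,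
      pd 0 (fun y => ρ y * u1 y * u1 y) x + pd 1 (fun y => ρ y * u1 y * u2 y) x
        + pd 2 (fun y => ρ y * u1 y * u3 y) x + pd 0 (fun y => p (ρ y)) x
        = ρ x * pd 0 φ x)
    (hmom2 : ∀ x ∈ Ω,
      pd 0 (fun y => ρ y * u2 y * u1 y) x + pd 1 (fun y => ρ y * u2 y * u2 y) x
        + pd 2 (fun y => ρ y * u2 y * u3 y) x + pd 1 (fun y => p (ρ y)) x
        = ρ x * pd 1 φ x)
    (hmom3 : ∀ x ∈ Ω,
      pd 0 (fun y => ρ y * u3 y * u1 y) x + pd 1 (fun y => ρ y * u3 y * u2 y) x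
        + pd 2 (fun y => ρ y * u3 y * u3 y) x + pd 2 (fun y => p (ρ y)) x
        = ρ x * pd 2 φ x) :
    ∀ x ∈ Ω,
      Dop u1 u2 u3 (Gfun u1 u2 u3) x
        = (1 / (Bfun ρ u1 u2 u3 φ h x + φ x - h (ρ x))) *
          ( (Gfun u1 u2 u3 x) ^ 2 * pd 0 (fun y => h (ρ y) - φ y) x
            - Gfun u1 u2 u3 x * Dop u1 u2 u3 (fun y => h (ρ y) - φ y) x ) :=
  riccati_equation_for_G_general Ω hΩ ρ u1 u2 u3 φ p p' h hρpos hu1pos hρ hu1 hu2 hu3 hφ hp hh hcont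
    hmom1 hmom2 hmom3
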